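/- For every ε > 0 and every s ≥ 0, one has s · g_ε(s) ≤ ε² · e^{-1}, where g_ε(s) = ε·log(1 + exp(-s/ε)). -/

import Mathlib

open Real

lemma Real.log_one_add_le_self {x : ℝ} (hx : -1 < x) : log (1 + x) ≤ x := by
  linarith [log_le_sub_one_of_pos (show 0 < 1 + x by linarith)]

lemma Real.mul_log_one_add_exp_neg_le {t : ℝ} (ht : 0 ≤ t) :
    t * log (1 + exp (-t)) ≤ exp (-1) :=
  calc t * log (1 + exp (-t))
      ≤ t * exp (-t) :=
        mul_le_mul_of_nonneg_left (log_one_add_le_self (by linarith [exp_pos (-t)])) ht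
    _ ≤ exp (-1) := mul_exp_neg_le_exp_neg_one t

theorem mul_softplus_le (ε : ℝ) (hε : 0 < ε) (s : ℝ) (hs : 0 ≤ s) :
    s * (ε * Real.log (1 + Real.exp (-s / ε))) ≤ ε ^ 2 * Real.exp (-1) := by
  have hscale : s * (ε * log (1 + exp (-s / ε)))
      = ε ^ 2 * (s / ε * log (1 + exp (-(s / ε)))) := by
    rw [neg_div]
    field_simp
  rw [hscale]
  exact mul_le_mul_of_nonneg_left (mul_log_one_add_exp_neg_le (div_nonneg hs hε.le)) (sq_nonneg ε)
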